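/- Let E_u/Q(t) be the elliptic curve y^2 = x^3 + 2A x^2 + B x, with A as in the fibration of the Shimura-curve family and B = B1···B8 with B1,...,B8 the explicit linear polynomials in t over Q[u]. Then for x0 = -B1·B2·B3·B6, the expression x0^3 + 2A·x0^2 + B·x0 is a square in Q(u)[t], so the point with x-coordinate x0 lies on E_u over Q(u)(t). -/
import Mathlib


open MvPolynomial

noncomputable section

/-- The variable `t` in `ℚ[t,u]`. -/
def t : MvPolynomial (Fin 2) ℚ := X 0

/-- The variable `u` in `ℚ[t,u]`. -/
def u : MvPolynomial (Fin 2) ℚ := X 1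

/-- The substitution `(t, u) ↦ (-t, -u)`. -/
def neg : MvPolynomial (Fin 2) ℚ →ₐ[ℚ] MvPolynomial (Fin 2) ℚ :=
  aeval fun i => -X i

def A : MvPolynomial (Fin 2) ℚ :=
  (u ^ 8 - 18 * u ^ 6 + 163 * u ^ 4 - 1152 * u ^ 2 + 4096) * t ^ 4 +
    (3 * u ^ 7 - 35 * u ^ 5 - 120 * u ^ 3 + 1536 * u) * t ^ 3 +
    (u ^ 8 - 13 * u ^ 6 + 32 * u ^ 4 - 152 * u ^ 2 + 1536) * t ^ 2 +
    (u ^ 7 + 3 * u ^ 5 - 156 * u ^ 3 + 672 * u) * t +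
    (3 * u ^ 6 - 33 * u ^ 4 + 112 * u ^ 2 - 80)

def B1 : MvPolynomial (Fin 2) ℚ := (u ^ 2 + u - 8) * t + (-u + 2)
def B3 : MvPolynomial (Fin 2) ℚ := (u ^ 2 - u - 8) * t + (u ^ 2 + u - 10)
def B5 : MvPolynomial (Fin 2) ℚ := (u ^ 2 - 7 * u + 8) * t + (-u ^ 2 + u + 2)
def B7 : MvPolynomial (Fin 2) ℚ := (u ^ 2 + 5 * u + 8) * t + (u ^ 2 + 3 * u + 2)
def B2 : MvPolynomial (Fin 2) ℚ := -neg B1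
def B4 : MvPolynomial (Fin 2) ℚ := -neg B3
def B6 : MvPolynomial (Fin 2) ℚ := -neg B5
def B8 : MvPolynomial (Fin 2) ℚ := -neg B7

def B : MvPolynomial (Fin 2) ℚ := B1 * B2 * B3 * B4 * B5 * B6 * B7 * B8

/-- The candidate `x`-coordinate `x₀ = -B₁B₂B₃B₆`. -/
def x0 : MvPolynomial (Fin 2) ℚ := -(B1 * B2 * B3 * B6)

/-- The map `ℚ[t,u] → ℚ(u)[t]`. -/
def φ : MvPolynomial (Fin 2) ℚ →ₐ[ℚ] Polynomial (RatFunc ℚ) :=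
  aeval ![Polynomial.X, Polynomial.C RatFunc.X]

/-- The square root of `-(B₁B₂B₃B₆ + B₄B₅B₇B₈ - 2A)`. -/
def c : MvPolynomial (Fin 2) ℚ :=
  (2 * u ^ 3 + 12 * u ^ 2 - 128) * t ^ 2 +
    (-u ^ 4 + 7 * u ^ 3 + 6 * u ^ 2 - 56 * u) * t +
    (u ^ 4 - u ^ 3 - 6 * u ^ 2 + 4 * u)

lemma B2_eq : B2 = (u ^ 2 - u - 8) * t + (-u - 2) := by
  simp only [B2, B1, neg, t, u, map_add, map_mul, map_sub, map_neg, map_pow, map_ofNat, aeval_X]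
  ring

lemma B4_eq : B4 = (u ^ 2 + u - 8) * t + (-u ^ 2 + u + 10) := by
  simp only [B4, B3, neg, t, u, map_add, map_mul, map_sub, map_neg, map_pow, map_ofNat, aeval_X]
  ring

lemma B6_eq : B6 = (u ^ 2 + 7 * u + 8) * t + (u ^ 2 + u - 2) := by
  simp only [B6, B5, neg, t, u, map_add, map_mul, map_sub, map_neg, map_pow, map_ofNat, aeval_X]
  ring

lemma B8_eq : B8 = (u ^ 2 - 5 * u + 8) * t + (-u ^ 2 + 3 * u - 2) := by
  simp only [B8, B7, neg, t, u, map_add, map_mul, map_sub, map_neg, map_pow, map_ofNat, aeval_X]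
  ring

set_option maxHeartbeats 2000000 in
lemma key : x0 ^ 3 + 2 * A * x0 ^ 2 + B * x0 = (B1 * B2 * B3 * B6 * c) ^ 2 := by
  rw [x0, B, B2_eq, B4_eq, B6_eq, B8_eq, A, B1, B3, B5, B7, c]
  ring

/-- The point with `x`-coordinate `x₀ = -B₁B₂B₃B₆` lies on `E_u : y² = x³ + 2Ax² + Bx`:
the value `x₀³ + 2A·x₀² + B·x₀` is a square in `ℚ(u)[t]`. -/
theorem x0_yields_point :
    ∃ y : Polynomial (RatFunc ℚ), φ (x0 ^ 3 + 2 * A * x0 ^ 2 + B * x0) = y ^ 2 := by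
  exact ⟨φ (B1 * B2 * B3 * B6 * c), by rw [key, map_pow]⟩

end
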